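/- arXiv:2005.03407 — 4 statements merged into one kernel-verified Lean document; each statement's English description precedes it below -/
import Mathlib

section
/- For any integers k >= 0 and n >= 1, the sum of k-th powers S_k(n) = 1^k + 2^k + ... + n^k satisfies S_k(n) = ((-1)^{k+1}/(k+1)) * sum_{j=1}^{k+1} (-1)^j * j! * S2(k+1, j) * (H_{j+1}^{(n)} - 1/(j+1)), where S2 denotes the Stirling numbers of the second kind and H_{j+1}^{(n)} is a hyperharmonic number. -/
/-- `hh r n` is the hyperharmonic number `H_n^{(r)}`. -/
def hh : ℕ → ℕ → ℚ
  | 0, n => if n = 0 then 0 else (n : ℚ)⁻¹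
  | r + 1, n => ∑ k ∈ Finset.Icc 1 n, hh r k

/-- `S2 n j` is the Stirling number of the second kind. -/
def S2 : ℕ → ℕ → ℕ
  | 0, 0 => 1
  | 0, _ + 1 => 0
  | _ + 1, 0 => 0
  | n + 1, j + 1 => (j + 1) * S2 n (j + 1) + S2 n j

open Finset

lemma hh_zero_right (r : ℕ) : hh r 0 = 0 := by
  cases r <;> simp [hh]

lemma hh_one_right (r : ℕ) : hh r 1 = 1 := by
  induction r with
  | zero => simp [hh]
  | succ r ih => show (∑ k ∈ Finset.Icc 1 1, hh r k) = 1; simp [ih]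

lemma hh_pascal (r m : ℕ) : hh (r+1) (m+1) = hh (r+1) m + hh r (m+1) := by
  show (∑ k ∈ Finset.Icc 1 (m+1), hh r k) = (∑ k ∈ Finset.Icc 1 m, hh r k) + hh r (m+1)
  exact Finset.sum_Icc_succ_top (by omega) _

/-- rising factorial -/
def Rq (m j : ℕ) : ℚ := ∏ s ∈ Finset.range j, ((m : ℚ) + s)

/-- `j! * hh m j` -/
def Wq (m j : ℕ) : ℚ := (j.factorial : ℚ) * hh m j

lemma Rq_zero (m : ℕ) : Rq m 0 = 1 := by simp [Rq]

lemma Rq_succ (m j : ℕ) : Rq m (j+1) = Rq m j * ((m:ℚ) + j) := by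
  simp [Rq, Finset.prod_range_succ]

lemma Rq_shift (m j : ℕ) : (m:ℚ) * Rq (m+1) j = Rq m j * ((m:ℚ) + j) := by
  rw [← Rq_succ]
  unfold Rq
  rw [Finset.prod_range_succ']
  have : ∀ s ∈ Finset.range j, ((m:ℚ) + (↑(s+1))) = (((m+1:ℕ):ℚ) + s) := by
    intro s _; push_cast; ring
  rw [Finset.prod_congr rfl this]
  push_cast
  ring

lemma Rq_zero_left (j : ℕ) : Rq 0 (j+1) = 0 := by
  apply Finset.prod_eq_zero (Finset.mem_range.mpr (Nat.succ_pos j))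
  simp

lemma Wq_zero (m : ℕ) : Wq m 0 = 0 := by simp [Wq, hh_zero_right]

lemma Wq_one (m : ℕ) : Wq m 1 = 1 := by simp [Wq, hh_one_right]

lemma wq_pascal (r j : ℕ) : Wq (r+1) (j+1) = ((j:ℚ)+1) * Wq (r+1) j + Wq r (j+1) := by
  unfold Wq
  rw [hh_pascal, Nat.factorial_succ]
  push_cast
  ring

lemma claim1 : ∀ m j : ℕ, Wq m (j+1) = ((m:ℚ) + j) * Wq m j + Rq m j := by
  intro m
  induction m with
  | zero =>
    intro j
    cases j with
    | zero => simp [Wq, Rq, hh]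
    | succ j =>
      rw [Rq_zero_left]
      unfold Wq
      have h1 : hh 0 (j+2) = ((j:ℚ)+2)⁻¹ := by
        simp [hh]
      have h2 : hh 0 (j+1) = ((j:ℚ)+1)⁻¹ := by
        simp [hh]
      rw [h1, h2, Nat.factorial_succ (j+1)]
      have hj1 : ((j:ℚ)+1) ≠ 0 := by positivity
      have hj2 : ((j:ℚ)+2) ≠ 0 := by positivity
      push_cast
      field_simp
      ring
  | succ m ih =>
    intro j
    have key : ∀ j : ℕ, (Wq (m+1) (j+1) = (((m+1:ℕ):ℚ) + j) * Wq (m+1) j + Rq (m+1) j) ∧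
        ((m:ℚ) * Wq (m+1) j = ((m:ℚ) + j) * Wq m j + Rq m j - Rq (m+1) j) := by
      intro j
      induction j with
      | zero =>
        constructor
        · simp [Wq_one, Wq_zero, Rq_zero]
        · simp [Wq_zero, Rq_zero]
      | succ j ihj =>
        obtain ⟨h1, h2⟩ := ihj
        have hshift := Rq_shift m j
        push_cast at h1 h2 ⊢
        have hc2 : (m:ℚ) * Wq (m+1) (j+1) =
            ((m:ℚ) + ((j:ℚ)+1)) * Wq m (j+1) + Rq m (j+1) - Rq (m+1) (j+1) := by
          have e1 := Rq_succ m j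
          have e2 := Rq_succ (m+1) j
          push_cast at e1 e2
          linear_combination (m:ℚ) * h1 + ((m:ℚ)+1+(j:ℚ)) * h2
            - ((m:ℚ)+(j:ℚ)+1) * (ih j) - e1 + e2 + hshift
        constructor
        · have hwp := wq_pascal m (j+1)
          have hih := ih (j+1)
          push_cast at hwp hih
          linear_combination hwp + hih - hc2
        · linear_combination hc2
    exact (key j).1

lemma S2_eq_zero : ∀ n j : ℕ, n < j → S2 n j = 0
  | 0, j+1, _ => rfl
  | n+1, j+1, h => by
      have h1 := S2_eq_zero n (j+1) (by omega)
      have h2 := S2_eq_zero n j (by omega)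
      show (j+1) * S2 n (j+1) + S2 n j = 0
      simp [h1, h2]

lemma G1 : ∀ (N m : ℕ),
    ∑ j ∈ Finset.range (N+1), ((-1:ℚ))^j * (S2 N j : ℚ) * Rq m j = (-(m:ℚ))^N := by
  intro N
  induction N with
  | zero => intro m; simp [S2, Rq]
  | succ N ih =>
    intro m
    rw [Finset.sum_range_succ']
    set t : ℕ → ℚ := fun j => (-1:ℚ)^j * (j:ℚ) * (S2 N j : ℚ) * Rq m j with ht
    have key : ∀ j ∈ Finset.range (N+1),
        ((-1:ℚ))^(j+1) * (S2 (N+1) (j+1) : ℚ) * Rq m (j+1)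
          = (t (j+1) - t j) + (-(m:ℚ)) * ((-1:ℚ)^j * (S2 N j : ℚ) * Rq m j) := by
      intro j _
      have hS : S2 (N+1) (j+1) = (j+1) * S2 N (j+1) + S2 N j := rfl
      simp only [ht, hS, Rq_succ]
      push_cast
      ring
    rw [Finset.sum_congr rfl key, Finset.sum_add_distrib, Finset.sum_range_sub t]
    have ht0 : t 0 = 0 := by simp [ht]
    have htN : t (N+1) = 0 := by simp [ht, S2_eq_zero N (N+1) (by omega)]
    have hS0 : S2 (N+1) 0 = 0 := rfl
    rw [ht0, htN, ← Finset.mul_sum, ih m, hS0]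
    push_cast
    ring

lemma G2 : ∀ (N m : ℕ),
    ∑ j ∈ Finset.range (N+2), ((-1:ℚ))^j * (S2 (N+1) j : ℚ) * Wq m j
      = (-1:ℚ)^(N+1) * ((N:ℚ)+1) * (m:ℚ)^N := by
  intro N
  induction N with
  | zero =>
    intro m
    rw [Finset.sum_range_succ, Finset.sum_range_succ, Finset.sum_range_zero]
    have h0 : S2 1 0 = 0 := rfl
    have h1 : S2 1 1 = 1 := rfl
    rw [h0, h1, Wq_one]
    norm_num
  | succ N ih =>
    intro m
    rw [Finset.sum_range_succ']
    set t : ℕ → ℚ := fun j => (-1:ℚ)^j * (j:ℚ) * (S2 (N+1) j : ℚ) * Wq m j with ht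
    have key : ∀ j ∈ Finset.range (N+2),
        ((-1:ℚ))^(j+1) * (S2 (N+2) (j+1) : ℚ) * Wq m (j+1)
          = (t (j+1) - t j) + ((-(m:ℚ)) * ((-1:ℚ)^j * (S2 (N+1) j : ℚ) * Wq m j)
              + (-1:ℚ) * ((-1:ℚ)^j * (S2 (N+1) j : ℚ) * Rq m j)) := by
      intro j _
      have hS : S2 (N+2) (j+1) = (j+1) * S2 (N+1) (j+1) + S2 (N+1) j := rfl
      simp only [ht, hS, claim1 m j]
      push_cast
      ring
    rw [Finset.sum_congr rfl key, Finset.sum_add_distrib, Finset.sum_range_sub t,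
      Finset.sum_add_distrib, ← Finset.mul_sum, ← Finset.mul_sum, ih m, G1 (N+1) m]
    have ht0 : t 0 = 0 := by simp [ht]
    have htN : t (N+2) = 0 := by simp [ht, S2_eq_zero (N+1) (N+2) (by omega)]
    have hS0 : S2 (N+2) 0 = 0 := rfl
    rw [ht0, htN, hS0]
    push_cast
    ring

lemma sum_Icc_one {F : ℕ → ℚ} (h0 : F 0 = 0) : ∀ n : ℕ,
    ∑ j ∈ Finset.range (n+1), F j = ∑ j ∈ Finset.Icc 1 n, F j := by
  intro n
  induction n with
  | zero => simp [h0]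
  | succ n ih =>
    rw [Finset.sum_range_succ, ih, Finset.sum_Icc_succ_top (by omega : 1 ≤ n+1)]

lemma G2' (k m : ℕ) :
    ∑ j ∈ Finset.Icc 1 (k+1), ((-1:ℚ))^j * (j.factorial : ℚ) * (S2 (k+1) j : ℚ) * hh m j
      = (-1:ℚ)^(k+1) * ((k:ℚ)+1) * (m:ℚ)^k := by
  rw [← sum_Icc_one
      (F := fun j => ((-1:ℚ))^j * (j.factorial : ℚ) * (S2 (k+1) j : ℚ) * hh m j)
      (by simp [show S2 (k+1) 0 = 0 from rfl]) (k+1)]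
  rw [← G2 k m]
  apply Finset.sum_congr rfl
  intro j _
  unfold Wq
  ring

theorem powerSum_eq_hyperharmonic (k n : ℕ) (hn : 1 ≤ n) :
    ∑ i ∈ Finset.Icc 1 n, (i : ℚ) ^ k =
      ((-1) ^ (k + 1) / (k + 1)) *
        ∑ j ∈ Finset.Icc 1 (k + 1),
          (-1) ^ j * (j.factorial : ℚ) * (S2 (k + 1) j : ℚ) *
            (hh n (j + 1) - 1 / (j + 1)) := by
  have hk : ((k:ℚ)+1) ≠ 0 := by positivity
  induction n, hn using Nat.le_induction with
  | base =>
    have hterm : ∀ j ∈ Finset.Icc 1 (k+1),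
        (-1:ℚ)^j * (j.factorial : ℚ) * (S2 (k+1) j : ℚ) * (hh 1 (j+1) - 1 / ((j:ℚ)+1))
          = (-1:ℚ)^j * (j.factorial : ℚ) * (S2 (k+1) j : ℚ) * hh 1 j := by
      intro j _
      have h1 : hh 1 (j+1) = hh 1 j + hh 0 (j+1) := hh_pascal 0 j
      have h2 : hh 0 (j+1) = 1/((j:ℚ)+1) := by
        simp [hh]
      rw [h1, h2]
      ring
    have hsq : ((-1:ℚ))^(k+1) * ((-1:ℚ))^(k+1) = 1 := by
      rw [← pow_add]; exact Even.neg_one_pow ⟨k+1, by ring⟩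
    have hdiv : ((k:ℚ)+1) * ((k:ℚ)+1)⁻¹ = 1 := mul_inv_cancel₀ hk
    rw [Finset.sum_congr rfl hterm, G2' k 1]
    rw [Finset.Icc_self, Finset.sum_singleton]
    push_cast
    linear_combination (-(((k:ℚ)+1) * ((k:ℚ)+1)⁻¹)) * hsq + (-1 : ℚ) * hdiv
  | succ n hn ih =>
    have hterm : ∀ j ∈ Finset.Icc 1 (k+1),
        (-1:ℚ)^j * (j.factorial : ℚ) * (S2 (k+1) j : ℚ) * (hh (n+1) (j+1) - 1 / ((j:ℚ)+1))
          = (-1:ℚ)^j * (j.factorial : ℚ) * (S2 (k+1) j : ℚ) * (hh n (j+1) - 1 / ((j:ℚ)+1))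
            + (-1:ℚ)^j * (j.factorial : ℚ) * (S2 (k+1) j : ℚ) * hh (n+1) j := by
      intro j _
      rw [hh_pascal n j]
      ring
    have hsq : ((-1:ℚ))^(k+1) * ((-1:ℚ))^(k+1) = 1 := by
      rw [← pow_add]; exact Even.neg_one_pow ⟨k+1, by ring⟩
    have hdiv : ((k:ℚ)+1) * ((k:ℚ)+1)⁻¹ = 1 := mul_inv_cancel₀ hk
    push_cast at ih ⊢
    rw [Finset.sum_Icc_succ_top (by omega : 1 ≤ n+1),
      Finset.sum_congr rfl hterm, Finset.sum_add_distrib, G2' k (n+1)]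
    push_cast
    linear_combination ih
      + (-(((n:ℚ)+1)^k) * (((k:ℚ)+1) * ((k:ℚ)+1)⁻¹)) * hsq
      + (-(((n:ℚ)+1)^k)) * hdiv
end

section
/- For all positive integers n and j, the hyperharmonic number satisfies H_n^{(r)} = (1/n!) * s1r(n+r, r+1; r), where s1r(a, b; r) denotes the (unsigned) r-Stirling number of the first kind. -/
/-- `s1rAux r m b` is the (unsigned) r-Stirling number of the first kind `[r+m, b]_r`,
defined by the recurrence `[n, b]_r = (n-1) [n-1, b]_r + [n-1, b-1]_r` for `n > r`,
with initial values `[r, b]_r = δ_{b,r}`. -/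
def s1rAux (r : ℕ) : ℕ → ℕ → ℕ
  | 0, b => if b = r then 1 else 0
  | _ + 1, 0 => 0
  | m + 1, b + 1 => (r + m) * s1rAux r m (b + 1) + s1rAux r m b

/-- `s1r a b r` is the (unsigned) r-Stirling number of the first kind `[a, b]_r`
(for `a ≥ r`): the number of permutations of `{1, …, a}` with `b` cycles such that
`1, …, r` are in distinct cycles. -/
def s1r (a b r : ℕ) : ℕ := s1rAux r (a - r) b

lemma Zlem (r : ℕ) : ∀ m b, b < r → s1rAux r m b = 0 := by
  intro m
  induction m with
  | zero => intro b hb; simp [s1rAux, Nat.ne_of_lt hb]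
  | succ m ih =>
    intro b hb
    cases b with
    | zero => simp [s1rAux]
    | succ b => simp [s1rAux, ih _ hb, ih _ (Nat.lt_of_succ_lt hb)]

lemma Arec (r m : ℕ) (hr : 1 ≤ r) :
    s1rAux r (m + 1) r = (r + m) * s1rAux r m r := by
  obtain ⟨b, rfl⟩ := Nat.exists_eq_add_of_le hr
  simp [s1rAux, Nat.add_comm 1 b, Zlem (b + 1) m b (by omega)]

lemma Nlem (r : ℕ) (hr : 1 ≤ r) :
    ∀ n, r * s1rAux (r + 1) n (r + 1) = (r + n) * s1rAux r n r := by
  intro n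
  induction n with
  | zero => simp [s1rAux]
  | succ n ih =>
    rw [Arec (r + 1) n (by omega), Arec r n hr]
    ring_nf
    ring_nf at ih
    nlinarith [ih]

lemma Mlem (r : ℕ) (hr : 1 ≤ r) :
    ∀ n, r * s1rAux (r + 1) n (r + 2) + s1rAux (r + 1) n (r + 1)
      = (r + n) * s1rAux r n (r + 1) + s1rAux r n r := by
  intro n
  induction n with
  | zero => simp [s1rAux]
  | succ n ih =>
    have h1 : s1rAux (r + 1) (n + 1) (r + 2)
        = (r + 1 + n) * s1rAux (r + 1) n (r + 2) + s1rAux (r + 1) n (r + 1) := rfl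
    have h2 : s1rAux r (n + 1) (r + 1)
        = (r + n) * s1rAux r n (r + 1) + s1rAux r n r := rfl
    rw [h1, h2, Arec (r + 1) n (by omega), Arec r n hr]
    have hN := Nlem r hr n
    nlinarith [ih, hN]

lemma Llem (r n : ℕ) (hr : 1 ≤ r) :
    s1rAux (r + 1) (n + 1) (r + 2)
      = (n + 1) * s1rAux (r + 1) n (r + 2) + s1rAux r (n + 1) (r + 1) := by
  have h1 : s1rAux (r + 1) (n + 1) (r + 2)
      = (r + 1 + n) * s1rAux (r + 1) n (r + 2) + s1rAux (r + 1) n (r + 1) := rfl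
  have h2 : s1rAux r (n + 1) (r + 1)
      = (r + n) * s1rAux r n (r + 1) + s1rAux r n r := rfl
  have hM := Mlem r hr n
  rw [h1, h2]; nlinarith [hM]

lemma A1 : ∀ n, s1rAux 1 n 1 = n.factorial := by
  intro n
  induction n with
  | zero => simp [s1rAux]
  | succ n ih => rw [Arec 1 n le_rfl, ih, Nat.factorial_succ]; ring

lemma hh_succ (r n : ℕ) : hh (r + 1) (n + 1) = hh (r + 1) n + hh r (n + 1) := by
  show (∑ k ∈ Finset.Icc 1 (n + 1), hh r k) = (∑ k ∈ Finset.Icc 1 n, hh r k) + hh r (n + 1)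
  rw [← Finset.sum_Icc_succ_top (by omega : 1 ≤ n + 1)]

lemma hh_zero (r : ℕ) : hh (r + 1) 0 = 0 := by
  show (∑ k ∈ Finset.Icc 1 0, hh r k) = 0
  simp

lemma MainLem (r : ℕ) (hr : 1 ≤ r) :
    ∀ n, (n.factorial : ℚ) * hh r n = (s1rAux r n (r + 1) : ℚ) := by
  induction r with
  | zero => omega
  | succ r ihr =>
    rcases Nat.eq_or_lt_of_le hr with h | h
    · -- r + 1 = 1, i.e. r = 0
      obtain rfl : r = 0 := by omega
      intro n
      induction n with
      | zero => simp [hh_zero 0, s1rAux]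
      | succ n ih =>
        have h1 : s1rAux 1 (n + 1) 2 = (1 + n) * s1rAux 1 n 2 + s1rAux 1 n 1 := rfl
        rw [hh_succ 0 n, h1, A1 n]
        have hhh : hh 0 (n + 1) = ((n : ℚ) + 1)⁻¹ := by
          show (if n + 1 = 0 then 0 else ((n + 1 : ℕ) : ℚ)⁻¹) = _
          simp
        push_cast
        rw [hhh, Nat.factorial_succ, mul_add]
        push_cast
        have hne : ((n : ℚ) + 1) ≠ 0 := by positivity
        field_simp
        nlinarith [ih]
    · have hr' : 1 ≤ r := by omega
      intro n
      induction n with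
      | zero =>
        simp [hh_zero r, s1rAux]
      | succ n ih =>
        rw [hh_succ r n, Llem r n hr', Nat.factorial_succ]
        push_cast
        have e1 := ihr hr' (n + 1)
        rw [mul_add]
        have : ((n + 1 : ℕ).factorial : ℚ) * hh r (n + 1) = (s1rAux r (n + 1) (r + 1) : ℚ) := e1
        push_cast [Nat.factorial_succ] at this
        nlinarith [ih, this]

theorem hyperharmonic_eq_rStirling (n r : ℕ) (hn : 1 ≤ n) (hr : 1 ≤ r) :
    hh r n = (1 / (n.factorial : ℚ)) * (s1r (n + r) (r + 1) r : ℚ) := by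
  have h := MainLem r hr n
  have hs : s1r (n + r) (r + 1) r = s1rAux r n (r + 1) := by
    simp [s1r]
  rw [hs, ← h]
  have : ((n.factorial : ℚ)) ≠ 0 := by positivity
  field_simp
end

section
/- For every integer k >= 0 and real x, the Bernoulli polynomial satisfies B_k(x) = sum_{j=0}^{k} (-1)^{k-j} * j! * S2(k, j) * H_{j+1}(x) - k * x^{k-1}, where H_{j+1}(x) = 1/(j+1) + sum_{t=1}^{j} C(x+j-t, j+1-t) * (1/t) for j >= 1 and H_1(x) = 1, with C denoting the generalized binomial coefficient. -/
open Finset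


/-- `gchoose x i` is the generalized binomial coefficient `C(x, i) = x(x-1)⋯(x-i+1)/i!`. -/
noncomputable def gchoose (x : ℝ) (i : ℕ) : ℝ :=
  (∏ t ∈ Finset.range i, (x - t)) / (i.factorial : ℝ)

/-- `Hpoly j x` is the polynomial extension `H_{j+1}^{(x)}` of the hyperharmonic numbers:
`H_{j+1}^{(x)} = 1/(j+1) + ∑_{t=1}^{j} C(x+j-t, j+1-t)/t` for `j ≥ 1`, and `H_1^{(x)} = 1`. -/
noncomputable def Hpoly (j : ℕ) (x : ℝ) : ℝ :=
  1 / ((j : ℝ) + 1) + ∑ t ∈ Finset.Icc 1 j, gchoose (x + j - t) (j + 1 - t) * (1 / t)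


lemma S2_eq_zero_s10 {k j : ℕ} (h : k < j) : S2 k j = 0 := by
  induction k generalizing j with
  | zero => cases j with | zero => omega | succ m => rfl
  | succ n ih =>
    cases j with
    | zero => omega
    | succ m => show (m+1) * S2 n (m+1) + S2 n m = 0
                rw [ih (by omega), ih (by omega)]; ring

lemma S2_self (k : ℕ) : S2 k k = 1 := by
  induction k with
  | zero => rfl
  | succ n ih =>
    show (n+1) * S2 n (n+1) + S2 n n = 1
    rw [ih, S2_eq_zero_s10 (Nat.lt_succ_self n)]; ring

lemma prod_shift (m : ℕ) (x : ℝ) :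
    x * ∏ s ∈ Finset.range m, (x + 1 + s) = (∏ s ∈ Finset.range m, (x + s)) * (x + m) := by
  have h1 := Finset.prod_range_succ' (fun s => (x + s : ℝ)) m
  rw [Finset.prod_range_succ] at h1
  push_cast at h1 ⊢
  have h3 : ∏ s ∈ Finset.range m, (x + 1 + (s:ℝ)) = ∏ s ∈ Finset.range m, (x + ((s:ℝ)+1)) :=
    Finset.prod_congr rfl (fun s _ => by ring)
  rw [h3, h1]; ring

noncomputable def Rf (m : ℕ) (x : ℝ) : ℝ := (∏ s ∈ Finset.range m, (x + s)) / (m.factorial : ℝ)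

lemma Rf_zero (x : ℝ) : Rf 0 x = 1 := by simp [Rf]

lemma Rf_succ_zero (m : ℕ) : Rf (m + 1) 0 = 0 := by
  simp [Rf, Finset.prod_eq_zero (Finset.mem_range.2 (Nat.succ_pos m))]

lemma Rf_succ_mul (m : ℕ) (x : ℝ) : ((m : ℝ) + 1) * Rf (m + 1) x = (x + m) * Rf m x := by
  rw [Rf, Rf, Finset.prod_range_succ, Nat.factorial_succ]
  push_cast
  field_simp

lemma Rf_pascal (m : ℕ) (x : ℝ) : Rf (m + 1) (x + 1) = Rf (m + 1) x + Rf m (x + 1) := by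
  have h1 : ((m:ℝ) + 1) ≠ 0 := by positivity
  have e1 := Rf_succ_mul m (x + 1)
  have e2 := Rf_succ_mul m x
  -- (m+1) * (Rf (m+1) x + Rf m (x+1)) = (x+m)Rf m x + (m+1) Rf m (x+1)
  -- and (m+1) Rf (m+1) (x+1) = (x+1+m) Rf m (x+1)
  -- need: (x+1+m) Rf m (x+1) = (x+m) Rf m x + (m+1) Rf m (x+1)
  have key := prod_shift m x
  have hf2 : (Nat.factorial m : ℝ) ≠ 0 := Nat.cast_ne_zero.2 (Nat.factorial_ne_zero _)
  have hk : x * Rf m (x+1) = (x + m) * Rf m x := by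
    rw [Rf, Rf]
    field_simp
    linarith [key]
  apply mul_left_cancel₀ h1
  rw [e1, mul_add, e2]
  linarith [hk]

lemma gchoose_eq_Rf (m : ℕ) (x : ℝ) : gchoose (x + m - 1) m = Rf m x := by
  rw [gchoose, Rf]
  congr 1
  rw [← Finset.prod_range_reflect]
  apply Finset.prod_congr rfl
  intro t ht
  have h : t < m := Finset.mem_range.1 ht
  have : ((m - 1 - t : ℕ) : ℝ) = (m : ℝ) - 1 - t := by
    have : m - 1 - t = m - (1 + t) := by omega
    rw [this]; push_cast [Nat.cast_sub (by omega : 1 + t ≤ m)]; ring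
  rw [this]; ring

lemma sign_split {k j : ℕ} (h : j ≤ k) : ((-1:ℝ))^(k-j) = (-1)^k * (-1)^j := by
  have h2 : (-1:ℝ)^j * (-1)^j = 1 := by
    rw [← pow_add]; exact Even.neg_one_pow ⟨j, rfl⟩
  calc ((-1:ℝ))^(k-j) = (-1)^(k-j) * ((-1)^j * (-1)^j) := by rw [h2, mul_one]
    _ = ((-1)^(k-j) * (-1)^j) * (-1)^j := by ring
    _ = (-1)^k * (-1)^j := by rw [← pow_add, Nat.sub_add_cancel h]

lemma key1 (k : ℕ) (x : ℝ) :
    ∑ j ∈ Finset.range (k+1), (-1:ℝ)^j * j.factorial * S2 k j * Rf j x = (-1)^k * x^k := by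
  induction k with
  | zero => simp [S2, Rf_zero]
  | succ k ih =>
    rw [Finset.sum_range_succ']
    have h0 : ((-1:ℝ))^0 * ((Nat.factorial 0 : ℕ) : ℝ) * ((S2 (k+1) 0 : ℕ) : ℝ) * Rf 0 x = 0 := by
      show _ * _ * ((0:ℕ):ℝ) * _ = 0
      simp
    rw [h0, add_zero]
    set v : ℕ → ℝ := fun i => (-1:ℝ)^i * i * i.factorial * S2 k i * Rf i x with hv
    have step : ∀ j ∈ Finset.range (k+1),
        (-1:ℝ)^(j+1) * (((j+1).factorial : ℕ) : ℝ) * ((S2 (k+1) (j+1) : ℕ) : ℝ) * Rf (j+1) x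
        = (v (j+1) - v j) - x * ((-1:ℝ)^j * j.factorial * S2 k j * Rf j x) := by
      intro j _
      have e := Rf_succ_mul j x
      have hS : (S2 (k+1) (j+1) : ℕ) = (j+1) * S2 k (j+1) + S2 k j := rfl
      rw [hS, hv]
      simp only [Nat.factorial_succ, pow_succ]
      push_cast
      linear_combination ((-1:ℝ)^j * (-1) * j.factorial * S2 k j) * e
    rw [Finset.sum_congr rfl step, Finset.sum_sub_distrib, Finset.sum_range_sub v (k+1),
        ← Finset.mul_sum, ih]
    have hv1 : v (k+1) = 0 := by
      simp [hv, S2_eq_zero_s10 (Nat.lt_succ_self k)]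
    have hv0 : v 0 = 0 := by simp [hv]
    rw [hv1, hv0, pow_succ]
    ring

noncomputable def cc (k m : ℕ) : ℝ :=
  ∑ j ∈ Finset.Icc m k, (-1:ℝ)^j * j.factorial * S2 k j / ((j:ℝ) + 1 - m)

lemma Hpoly_eq (j : ℕ) (x : ℝ) :
    Hpoly j x = ∑ m ∈ Finset.range (j+1), Rf m x * (1 / ((j:ℝ) + 1 - m)) := by
  rw [Hpoly, Finset.sum_range_succ']
  have f0 : Rf 0 x * (1 / ((j:ℝ) + 1 - ((0:ℕ):ℝ))) = 1 / ((j:ℝ)+1) := by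
    simp [Rf_zero]
  rw [f0, add_comm]
  congr 1
  apply Finset.sum_nbij' (i := fun t => j - t) (j := fun m => j - m)
  · intro t ht
    simp only [Finset.mem_Icc] at ht
    simp only [Finset.mem_range]
    omega
  · intro m hm
    simp only [Finset.mem_range] at hm
    simp only [Finset.mem_Icc]
    omega
  · intro t ht
    simp only [Finset.mem_Icc] at ht
    omega
  · intro m hm
    simp only [Finset.mem_range] at hm
    omega
  · intro t ht
    simp only [Finset.mem_Icc] at ht
    have h1 : j - t + 1 = j + 1 - t := by omega
    have h2 : ((j - t : ℕ) : ℝ) = (j : ℝ) - t := by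
      rw [Nat.cast_sub ht.2]
    have h3 : gchoose (x + (j:ℝ) - (t:ℕ)) (j + 1 - t) = Rf (j - t + 1) x := by
      rw [h1]
      have := gchoose_eq_Rf (j + 1 - t) x
      rw [← this, ← h1]
      congr 1
      rw [Nat.cast_add, h2]
      push_cast
      ring
    rw [h3, h1]
    have h4 : ((j:ℝ) + 1 - ((j - t + 1 : ℕ):ℝ)) = (t:ℝ) := by
      rw [Nat.cast_add, h2]; push_cast; ring
    rw [← h1, h4]

lemma cc_base (m : ℕ) : cc m m = (-1:ℝ)^m * m.factorial := by
  rw [cc, Finset.Icc_self, Finset.sum_singleton, S2_self]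
  have : ((m:ℝ) + 1 - m) = 1 := by ring
  rw [this]
  simp

lemma cc_rec (k r : ℕ) (hr : r ≤ k) :
    cc (k+1) (r+1) = (-1:ℝ)^(r+1) * r.factorial * S2 k r + r * (cc k (r+1) - cc k r) := by
  have hmap : Finset.Icc (r+1) (k+1) = (Finset.Icc r k).map (addRightEmbedding 1) := by
    rw [Finset.map_add_right_Icc]
  have hshift : cc (k+1) (r+1)
      = ∑ i ∈ Finset.Icc r k,
          (-1:ℝ)^(i+1) * ((i+1).factorial : ℝ) * (S2 (k+1) (i+1) : ℝ) / ((i:ℝ) + 1 - r) := by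
    rw [cc, hmap, Finset.sum_map]
    apply Finset.sum_congr rfl
    intro i _
    simp only [addRightEmbedding_apply]
    push_cast
    ring_nf
  rw [hshift]
  have split : ∀ i ∈ Finset.Icc r k,
      (-1:ℝ)^(i+1) * ((i+1).factorial : ℝ) * (S2 (k+1) (i+1) : ℝ) / ((i:ℝ) + 1 - r)
      = ((-1:ℝ)^(i+1) * ((i:ℝ) + 1) * ((i+1).factorial : ℝ) * (S2 k (i+1) : ℝ) / ((i:ℝ) + 1 - r))
        + (-((-1:ℝ)^i * (i.factorial : ℝ) * (S2 k i : ℝ))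
           - r * ((-1:ℝ)^i * (i.factorial : ℝ) * (S2 k i : ℝ) / ((i:ℝ) + 1 - r))) := by
    intro i hi
    simp only [Finset.mem_Icc] at hi
    have hne : ((i:ℝ) + 1 - r) ≠ 0 := by
      have : (r:ℝ) ≤ i := Nat.cast_le.2 hi.1
      nlinarith
    have hS : (S2 (k+1) (i+1) : ℝ) = ((i+1) * S2 k (i+1) + S2 k i : ℕ) := rfl
    rw [hS]
    push_cast [Nat.factorial_succ]
    field_simp
    ring
  rw [Finset.sum_congr rfl split, Finset.sum_add_distrib, Finset.sum_sub_distrib]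
  -- first sum: shift back up and peel
  have hP : ∑ i ∈ Finset.Icc r k,
      (-1:ℝ)^(i+1) * ((i:ℝ) + 1) * ((i+1).factorial : ℝ) * (S2 k (i+1) : ℝ) / ((i:ℝ) + 1 - r)
      = ∑ j ∈ Finset.Icc (r+1) k,
          ((-1:ℝ)^j * (j.factorial : ℝ) * (S2 k j : ℝ)
           + r * ((-1:ℝ)^j * (j.factorial : ℝ) * (S2 k j : ℝ) / ((j:ℝ) + 1 - (r+1)))) := by
    have step1 : ∑ i ∈ Finset.Icc r k,
        (-1:ℝ)^(i+1) * ((i:ℝ) + 1) * ((i+1).factorial : ℝ) * (S2 k (i+1) : ℝ) / ((i:ℝ) + 1 - r)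
        = ∑ jj ∈ Finset.Icc (r+1) (k+1),
            (-1:ℝ)^jj * (jj:ℝ) * (jj.factorial : ℝ) * (S2 k jj : ℝ) / ((jj:ℝ) - r) := by
      rw [hmap, Finset.sum_map]
      apply Finset.sum_congr rfl
      intro i _
      simp only [addRightEmbedding_apply]
      push_cast
      ring_nf
    rw [step1]
    have htop : Finset.Icc (r+1) (k+1) = insert (k+1) (Finset.Icc (r+1) k) := by
      ext a; simp only [Finset.mem_Icc, Finset.mem_insert]; omega
    rw [htop, Finset.sum_insert (by simp only [Finset.mem_Icc]; omega)]
    have hz : (S2 k (k+1) : ℝ) = 0 := by rw [S2_eq_zero_s10 (Nat.lt_succ_self k)]; simp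
    rw [hz, mul_zero, zero_div, zero_add]
    apply Finset.sum_congr rfl
    intro j hj
    simp only [Finset.mem_Icc] at hj
    have h1 : r + 1 ≤ j := hj.1
    have h2 : ((r:ℝ)) + 1 ≤ (j:ℝ) := by exact_mod_cast h1
    have hne : ((j:ℝ) - (r:ℝ)) ≠ 0 := by nlinarith
    have hne2 : ((j:ℝ) + 1 - ((r:ℝ)+1)) ≠ 0 := by nlinarith
    have hre : ((j:ℝ) + 1 - ((r:ℝ)+1)) = (j:ℝ) - r := by ring
    rw [hre]
    field_simp
    ring
  rw [hP]
  -- now everything is sums over explicit ranges; relate to cc and σ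
  have hsigma : ∑ i ∈ Finset.Icc r k, ((-1:ℝ)^i * (i.factorial : ℝ) * (S2 k i : ℝ))
      = (-1:ℝ)^r * (r.factorial : ℝ) * (S2 k r : ℝ)
        + ∑ j ∈ Finset.Icc (r+1) k, ((-1:ℝ)^j * (j.factorial : ℝ) * (S2 k j : ℝ)) := by
    rw [Finset.Icc_add_one_left_eq_Ioc, ← Finset.Ioc_insert_left hr,
        Finset.sum_insert (by simp)]
  rw [Finset.sum_add_distrib]
  have hcc1 : cc k (r+1) = ∑ j ∈ Finset.Icc (r+1) k,
      (-1:ℝ)^j * (j.factorial : ℝ) * (S2 k j : ℝ) / ((j:ℝ) + 1 - (r+1)) := by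
    rw [cc]
    apply Finset.sum_congr rfl
    intro j _
    push_cast
    ring_nf
  have hcc0 : cc k r = ∑ i ∈ Finset.Icc r k,
      (-1:ℝ)^i * (i.factorial : ℝ) * (S2 k i : ℝ) / ((i:ℝ) + 1 - r) := rfl
  rw [← Finset.mul_sum, ← hcc1, Finset.sum_neg_distrib, hsigma, ← Finset.mul_sum, ← hcc0]
  ring

lemma cc_closed (k : ℕ) : ∀ r : ℕ, r ≤ k →
    cc (k+1) (r+1) = (-1:ℝ)^(r+1) * (k+1) * r.factorial * S2 k r := by
  induction k with
  | zero =>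
    intro r hr
    interval_cases r
    rw [cc_base 1]
    norm_num [S2]
  | succ k ih =>
    intro r hr
    rcases Nat.eq_or_lt_of_le hr with h | h
    · subst h
      rw [cc_base (k+2)]
      rw [S2_self]
      push_cast [Nat.factorial_succ]
      ring
    · have hrk : r ≤ k := by omega
      rw [cc_rec (k+1) r (by omega)]
      cases r with
      | zero =>
        have h0 : (S2 (k+1) 0 : ℝ) = 0 := by norm_num [S2]
        rw [h0]
        simp
      | succ s =>
        have h1 := ih (s+1) (by omega)
        have h2 := ih s (by omega)
        rw [h1, h2]
        have hS : (S2 (k+1) (s+1) : ℝ) = (((s+1) * S2 k (s+1) + S2 k s : ℕ) : ℝ) := rfl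
        rw [hS]
        push_cast [Nat.factorial_succ]
        ring

noncomputable def Bval (n : ℕ) (y : ℝ) : ℝ :=
  ((Polynomial.bernoulli n).map (algebraMap ℚ ℝ)).eval y

open Polynomial in
lemma Bval_one_add (n : ℕ) (x : ℝ) : Bval n (1 + x) = Bval n x + n * x^(n-1) := by
  have hpoly : (Polynomial.bernoulli n).comp (1 + X) =
      Polynomial.bernoulli n + (n : ℚ[X]) * X^(n-1) := by
    apply Polynomial.funext
    intro r
    rw [eval_comp]
    simp only [eval_add, eval_mul, eval_pow, eval_one, eval_X, eval_natCast]
    exact Polynomial.bernoulli_eval_one_add n r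
  have hmap := congrArg (Polynomial.map (algebraMap ℚ ℝ)) hpoly
  rw [Polynomial.map_comp] at hmap
  have h3 := congrArg (Polynomial.eval x) hmap
  simp only [Polynomial.eval_comp, Polynomial.map_add, Polynomial.map_one, Polynomial.map_mul,
    Polynomial.map_natCast, Polynomial.map_pow, Polynomial.map_X, Polynomial.eval_add,
    Polynomial.eval_mul, Polynomial.eval_pow, Polynomial.eval_X, Polynomial.eval_natCast,
    Polynomial.eval_one] at h3
  simpa [Bval] using h3

noncomputable def GP (κ : ℕ) : Polynomial ℝ :=
  ∑ r ∈ Finset.range (κ+1),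
    Polynomial.C ((-1:ℝ)^r * r.factorial * S2 κ r / (r+1).factorial)
      * ∏ s ∈ Finset.range (r+1), (Polynomial.X + Polynomial.C (s:ℝ))

noncomputable def Gsum (κ : ℕ) (x : ℝ) : ℝ :=
  ∑ r ∈ Finset.range (κ+1), (-1:ℝ)^r * r.factorial * S2 κ r * Rf (r+1) x

lemma GP_eval (κ : ℕ) (x : ℝ) : (GP κ).eval x = Gsum κ x := by
  rw [GP, Gsum, Polynomial.eval_finset_sum]
  apply Finset.sum_congr rfl
  intro r _
  rw [Polynomial.eval_mul, Polynomial.eval_C, Polynomial.eval_prod]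
  simp only [Polynomial.eval_add, Polynomial.eval_X, Polynomial.eval_natCast, Polynomial.eval_C]
  rw [Rf]
  have hf : ((r+1).factorial : ℝ) ≠ 0 := Nat.cast_ne_zero.2 (Nat.factorial_ne_zero _)
  field_simp

noncomputable def RP (κ : ℕ) : Polynomial ℝ :=
  Polynomial.C ((-1:ℝ)^κ) *
    (((Polynomial.bernoulli (κ+1)).map (algebraMap ℚ ℝ)).comp
        (Polynomial.X + Polynomial.C 1) - Polynomial.C (Bval (κ+1) 1))

lemma RP_eval (κ : ℕ) (x : ℝ) :
    (RP κ).eval x = (-1:ℝ)^κ * (Bval (κ+1) (x+1) - Bval (κ+1) 1) := by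
  rw [RP]
  simp [Polynomial.eval_comp, Bval]

lemma G_rigid (κ : ℕ) : Polynomial.C ((κ:ℝ)+1) * GP κ = RP κ := by
  apply Polynomial.eq_of_infinite_eval_eq
  apply Set.Infinite.mono (s := Set.range (fun n : ℕ => (n : ℝ)))
  swap
  · exact Set.infinite_range_of_injective Nat.cast_injective
  rintro - ⟨n, rfl⟩
  simp only [Set.mem_setOf_eq, Polynomial.eval_mul, Polynomial.eval_C, GP_eval, RP_eval]
  induction n with
  | zero =>
    have h0 : Gsum κ 0 = 0 := by
      rw [Gsum]
      apply Finset.sum_eq_zero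
      intro r _
      rw [Rf_succ_zero]; ring
    push_cast
    rw [h0]
    norm_num
  | succ n ihn =>
    have hdiff : Gsum κ (n+1) - Gsum κ n = (-1:ℝ)^κ * ((n:ℝ)+1)^κ := by
      rw [Gsum, Gsum, ← Finset.sum_sub_distrib]
      have : ∀ r ∈ Finset.range (κ+1),
          (-1:ℝ)^r * r.factorial * S2 κ r * Rf (r+1) ((n:ℝ)+1)
          - (-1:ℝ)^r * r.factorial * S2 κ r * Rf (r+1) (n:ℝ)
          = (-1:ℝ)^r * r.factorial * S2 κ r * Rf r ((n:ℝ)+1) := by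
        intro r _
        rw [Rf_pascal r (n:ℝ)]
        ring
      rw [Finset.sum_congr rfl this, key1]
    have hB : Bval (κ+1) (((n:ℝ)+1)+1) = Bval (κ+1) ((n:ℝ)+1) + (κ+1) * ((n:ℝ)+1)^κ := by
      have := Bval_one_add (κ+1) ((n:ℝ)+1)
      rw [add_comm 1 ((n:ℝ)+1)] at this
      simpa using this
    push_cast
    push_cast at ihn
    rw [hB]
    nlinarith [hdiff, ihn]

open Polynomial in
lemma prod_eval_zero (r : ℕ) :
    (∏ s ∈ Finset.range (r+1), (X + C (s:ℝ))).eval 0 = 0 := by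
  rw [Polynomial.eval_prod]
  apply Finset.prod_eq_zero (Finset.mem_range.2 (Nat.succ_pos r))
  simp

open Polynomial in
lemma deriv_prod_eval_zero (r : ℕ) :
    (Polynomial.derivative (∏ s ∈ Finset.range (r+1), (X + C (s:ℝ)))).eval 0
      = (r.factorial : ℝ) := by
  induction r with
  | zero => simp
  | succ r ih =>
    rw [Finset.prod_range_succ, Polynomial.derivative_mul]
    rw [Polynomial.eval_add, Polynomial.eval_mul, Polynomial.eval_mul, ih]
    rw [prod_eval_zero]
    simp only [Polynomial.derivative_add, Polynomial.derivative_X, Polynomial.derivative_C,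
      add_zero, Polynomial.eval_add, Polynomial.eval_X, Polynomial.eval_natCast,
      Polynomial.eval_one, Polynomial.eval_C]
    push_cast [Nat.factorial_succ]
    ring

open Polynomial in
lemma cc_zero_eq (κ : ℕ) : cc κ 0 = (-1:ℝ)^κ * Bval κ 1 := by
  have h := congrArg (fun p => (Polynomial.derivative p).eval 0) (G_rigid κ)
  -- LHS
  have hL : (Polynomial.derivative (Polynomial.C ((κ:ℝ)+1) * GP κ)).eval 0
      = ((κ:ℝ)+1) * cc κ 0 := by
    rw [Polynomial.derivative_C_mul, Polynomial.eval_mul, Polynomial.eval_C, GP,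
        Polynomial.derivative_sum, Polynomial.eval_finset_sum]
    congr 1
    have hrange : Finset.range (κ+1) = Finset.Icc 0 κ := by
      rw [← Nat.Ico_zero_eq_range, Finset.Ico_add_one_right_eq_Icc]
    rw [cc, ← hrange]
    apply Finset.sum_congr rfl
    intro r _
    rw [Polynomial.derivative_C_mul, Polynomial.eval_mul, Polynomial.eval_C,
        deriv_prod_eval_zero]
    have hf : ((r+1).factorial : ℝ) = ((r:ℝ)+1) * r.factorial := by
      push_cast [Nat.factorial_succ]; ring
    have h1 : ((r:ℝ)+1) ≠ 0 := by positivity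
    have h2 : (r.factorial : ℝ) ≠ 0 := Nat.cast_ne_zero.2 (Nat.factorial_ne_zero _)
    rw [hf]
    push_cast
    field_simp
    ring
  -- RHS
  have hR : (Polynomial.derivative (RP κ)).eval 0 = (-1:ℝ)^κ * (((κ:ℝ)+1) * Bval κ 1) := by
    rw [RP, Polynomial.derivative_C_mul, Polynomial.eval_mul, Polynomial.eval_C]
    congr 1
    rw [Polynomial.derivative_sub, Polynomial.derivative_C, sub_zero]
    rw [Polynomial.derivative_comp]
    have hd : Polynomial.derivative ((Polynomial.bernoulli (κ+1)).map (algebraMap ℚ ℝ))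
        = Polynomial.map (algebraMap ℚ ℝ) (((κ:ℚ[X])+1) * Polynomial.bernoulli κ) := by
      rw [Polynomial.derivative_map]
      congr 1
      rw [Polynomial.derivative_bernoulli_add_one]
    rw [hd]
    simp only [Polynomial.map_mul, Polynomial.map_add, Polynomial.map_natCast, Polynomial.map_one]
    simp [Polynomial.mul_comp, Polynomial.add_comp, Polynomial.natCast_comp, Polynomial.one_comp,
          Polynomial.eval_comp, Bval]
  rw [hL, hR] at h
  have hk : ((κ:ℝ)+1) ≠ 0 := by positivity
  have h2 : ((κ:ℝ)+1) * cc κ 0 = ((κ:ℝ)+1) * ((-1:ℝ)^κ * Bval κ 1) := by linarith [h]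
  exact mul_left_cancel₀ hk h2

lemma swap_sum (k : ℕ) (x : ℝ) :
    ∑ j ∈ Finset.range (k+1), (-1:ℝ)^j * j.factorial * S2 k j * Hpoly j x
      = ∑ m ∈ Finset.range (k+1), Rf m x * cc k m := by
  have hpt : ∀ j ∈ Finset.range (k+1),
      (-1:ℝ)^j * j.factorial * S2 k j * Hpoly j x
      = ∑ m ∈ Finset.Ico 0 (j+1),
          (-1:ℝ)^j * j.factorial * S2 k j * (Rf m x * (1 / ((j:ℝ) + 1 - m))) := by
    intro j _
    rw [Hpoly_eq, Finset.mul_sum, Finset.range_eq_Ico]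
  rw [Finset.sum_congr rfl hpt, Finset.range_eq_Ico,
      ← Finset.sum_Ico_Ico_comm 0 (k+1)
        (fun m j => (-1:ℝ)^j * j.factorial * S2 k j * (Rf m x * (1 / ((j:ℝ) + 1 - m))))]
  apply Finset.sum_congr rfl
  intro m _
  rw [cc, ← Finset.Ico_add_one_right_eq_Icc, Finset.mul_sum]
  apply Finset.sum_congr rfl
  intro j _
  ring


theorem bernoulliPoly_eq_hyperharmonicPoly (k : ℕ) (x : ℝ) :
    ((Polynomial.bernoulli k).map (algebraMap ℚ ℝ)).eval x =
      (∑ j ∈ Finset.range (k + 1),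
        (-1 : ℝ) ^ (k - j) * (j.factorial : ℝ) * (S2 k j : ℝ) * Hpoly j x) -
      (k : ℝ) * x ^ (k - 1) := by
  rcases Nat.eq_zero_or_pos k with hk | hk
  · subst hk
    have h1 : Hpoly 0 x = 1 := by simp [Hpoly]
    have h2 : ((S2 0 0 : ℕ) : ℝ) = 1 := by norm_num [S2]
    simp [h1, h2]
  obtain ⟨κ, rfl⟩ : ∃ κ, k = κ+1 := ⟨k-1, by omega⟩
  set k := κ + 1 with hkdef
  -- step 1 : replace the sign
  have hsign : ∀ j ∈ Finset.range (k+1),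
      (-1 : ℝ) ^ (k - j) * (j.factorial : ℝ) * (S2 k j : ℝ) * Hpoly j x
      = (-1:ℝ)^k * ((-1:ℝ)^j * j.factorial * S2 k j * Hpoly j x) := by
    intro j hj
    rw [sign_split (by simpa using Nat.lt_succ_iff.1 (Finset.mem_range.1 hj))]
    ring
  rw [Finset.sum_congr rfl hsign, ← Finset.mul_sum, swap_sum]
  -- step 2 : peel off m = 0 and use the closed form for cc
  rw [Finset.sum_range_succ']
  have hm0 : Rf 0 x * cc k 0 = (-1:ℝ)^k * Bval k 1 := by
    rw [Rf_zero, cc_zero_eq, one_mul]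
  have hms : ∀ r ∈ Finset.range (κ+1),
      Rf (r+1) x * cc k (r+1)
      = -(((κ:ℝ)+1) * ((-1:ℝ)^r * r.factorial * S2 κ r * Rf (r+1) x)) := by
    intro r hr
    rw [cc_closed κ r (Nat.lt_succ_iff.1 (Finset.mem_range.1 hr)), pow_succ]
    ring
  rw [hm0, Finset.sum_congr rfl hms, Finset.sum_neg_distrib, ← Finset.mul_sum]
  have hGsum : (∑ r ∈ Finset.range (κ+1),
      (-1:ℝ)^r * r.factorial * S2 κ r * Rf (r+1) x) = Gsum κ x := rfl
  rw [hGsum]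
  -- step 3 : G_rigid evaluated at x
  have hG := congrArg (Polynomial.eval x) (G_rigid κ)
  rw [Polynomial.eval_mul, Polynomial.eval_C, GP_eval, RP_eval] at hG
  rw [hG]
  -- step 4 : finish with Bval_one_add
  have hB := Bval_one_add k x
  have hBx : Bval k (x+1) = Bval k x + ((κ:ℝ)+1) * x^κ := by
    rw [add_comm x 1] at *
    have : (k:ℝ) = (κ:ℝ)+1 := by rw [hkdef]; push_cast; ring
    rw [this] at hB
    have h2 : k - 1 = κ := by omega
    rw [h2] at hB
    exact hB
  have hsq : (-1:ℝ)^κ * (-1:ℝ)^κ = 1 := by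
    rw [← pow_add]; exact Even.neg_one_pow ⟨κ, rfl⟩
  have hLHS : ((Polynomial.bernoulli k).map (algebraMap ℚ ℝ)).eval x = Bval k x := rfl
  rw [hLHS]
  have hk1 : (-1:ℝ)^k = -(-1:ℝ)^κ := by rw [pow_succ]; ring
  have h2 : k - 1 = κ := by omega
  rw [hk1, h2]
  have hkc : (k:ℝ) = (κ:ℝ)+1 := by rw [hkdef]; push_cast; ring
  rw [hkc]
  linear_combination (-1:ℝ) * hBx - Bval k (x+1) * hsq
end

section
/- For every integer k >= 1, the Faulhaber polynomial satisfies the symmetry P_k(-(x+1)) = (-1)^{k+1} * P_k(x) for all real x, where P_k is the unique polynomial with P_k(n) = 1^k + ... + n^k for all positive integers n. -/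
theorem faulhaber_symmetry (k : ℕ) (hk : 1 ≤ k) (P : Polynomial ℝ)
    (hP : ∀ N : ℕ, 1 ≤ N → P.eval (N : ℝ) = ∑ i ∈ Finset.Icc 1 N, (i : ℝ) ^ k) (x : ℝ) :
    P.eval (-(x + 1)) = (-1 : ℝ) ^ (k + 1) * P.eval x := by
  -- Step 1: P(y) - P(y-1) = y^k as polynomials
  have hstep : ∀ y : ℝ, P.eval y - P.eval (y - 1) = y ^ k := by
    have hR : P - P.comp (Polynomial.X - 1) - Polynomial.X ^ k = 0 := by
      apply Polynomial.eq_zero_of_infinite_isRoot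
      apply Set.infinite_of_injective_forall_mem
        (f := fun n : ℕ => ((n : ℝ) + 2))
      · intro a b hab
        simpa using hab
      · intro n
        simp only [Set.mem_setOf_eq, Polynomial.IsRoot, Polynomial.eval_sub,
          Polynomial.eval_comp, Polynomial.eval_X, Polynomial.eval_one,
          Polynomial.eval_pow]
        have h1 : P.eval ((n + 2 : ℕ) : ℝ) = ∑ i ∈ Finset.Icc 1 (n + 2), (i : ℝ) ^ k :=
          hP (n + 2) (by omega)
        have h2 : P.eval ((n + 1 : ℕ) : ℝ) = ∑ i ∈ Finset.Icc 1 (n + 1), (i : ℝ) ^ k :=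
          hP (n + 1) (by omega)
        have h3 : ∑ i ∈ Finset.Icc 1 (n + 2), (i : ℝ) ^ k
            = (∑ i ∈ Finset.Icc 1 (n + 1), (i : ℝ) ^ k) + ((n + 2 : ℕ) : ℝ) ^ k :=
          Finset.sum_Icc_succ_top (by omega) _
        push_cast at h1 h2 h3
        have : (n : ℝ) + 2 - 1 = (n : ℝ) + 1 := by ring
        rw [this, h1, h2, h3]
        ring
    intro y
    have := congrArg (Polynomial.eval y) hR
    simpa [Polynomial.eval_comp, sub_eq_zero] using this
  -- values at negative integers
  have hneg : ∀ n : ℕ, P.eval (-((n : ℝ) + 1)) = (-1 : ℝ) ^ (k + 1) * P.eval (n : ℝ) := by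
    intro n
    induction n with
    | zero =>
      have h0 : P.eval 0 = 0 := by
        have h1 := hP 1 le_rfl
        have := hstep 1
        simp at h1
        rw [h1] at this
        simpa using this
      have hm1 : P.eval (-1) = 0 := by
        have := hstep 0
        rw [h0] at this
        have hz : (0 : ℝ) ^ k = 0 := by
          exact zero_pow (by omega)
        rw [hz] at this
        have : P.eval (0 - 1) = 0 := by linarith
        simpa using this
      simp [h0, hm1]
    | succ n ih =>
      have hs := hstep (-((n : ℝ) + 1))
      have hs2 := hstep ((n : ℝ) + 1)
      have hcast : -((n : ℝ) + 1) - 1 = -(((n : ℕ) + 1 : ℕ) : ℝ) - 1 + 0 := by push_cast; ring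
      have key : P.eval (-(((n + 1 : ℕ) : ℝ) + 1))
          = P.eval (-((n : ℝ) + 1)) - (-((n : ℝ) + 1)) ^ k := by
        have : -(((n + 1 : ℕ) : ℝ) + 1) = -((n : ℝ) + 1) - 1 := by push_cast; ring
        rw [this]; linarith
      rw [key, ih]
      have hodd : (-((n : ℝ) + 1)) ^ k = (-1 : ℝ) ^ k * ((n : ℝ) + 1) ^ k := by
        rw [neg_pow]
      have hPn1 : P.eval (((n + 1 : ℕ)) : ℝ) = P.eval (n : ℝ) + ((n : ℝ) + 1) ^ k := by
        have h := hstep ((n : ℝ) + 1)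
        have e : (n : ℝ) + 1 - 1 = (n : ℝ) := by ring
        rw [e] at h
        push_cast
        linarith
      rw [hPn1, hodd]
      have : (-1 : ℝ) ^ (k + 1) = -(-1 : ℝ) ^ k := by ring
      rw [this]; ring
  -- Q = 0
  have hQ : P.comp (-(Polynomial.X + 1)) - Polynomial.C ((-1 : ℝ) ^ (k + 1)) * P = 0 := by
    apply Polynomial.eq_zero_of_infinite_isRoot
    apply Set.infinite_of_injective_forall_mem (f := fun n : ℕ => (n : ℝ))
    · exact fun a b hab => Nat.cast_injective hab
    · intro n
      simp only [Set.mem_setOf_eq, Polynomial.IsRoot, Polynomial.eval_sub,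
        Polynomial.eval_mul, Polynomial.eval_C, Polynomial.eval_comp,
        Polynomial.eval_neg, Polynomial.eval_add, Polynomial.eval_X, Polynomial.eval_one]
      rw [hneg n]
      ring
  have := congrArg (Polynomial.eval x) hQ
  simp only [Polynomial.eval_sub, Polynomial.eval_mul, Polynomial.eval_C,
    Polynomial.eval_comp, Polynomial.eval_neg, Polynomial.eval_add,
    Polynomial.eval_X, Polynomial.eval_one, Polynomial.eval_zero] at this
  linarith
end
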